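/- Let G be a finite simple graph on [n] = {1,…,n} such that the complement G^c is a tree and 1,2,…,n is a perfect elimination order of G^c. Then for every k ≥ 0 the k-th homological shift ideal HS_k(I(G)) ⊆ K[x_1,…,x_n] has linear quotients. -/

import Mathlib

open MvPolynomial

/-- An ideal of `K[x_1,…,x_n]` is *generated by variables* if it is the span of the
image of a subset of the variables. -/
def genByVars {K : Type*} [Field K] {n : ℕ} (I : Ideal (MvPolynomial (Fin n) K)) : Prop :=
  ∃ T : Set (Fin n), I = Ideal.span (MvPolynomial.X '' T)
/-- A polynomial is a monomial (with coefficient `1`). -/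
def IsMonomialElt {K : Type*} [Field K] {n : ℕ} (p : MvPolynomial (Fin n) K) : Prop :=
  ∃ a : Fin n →₀ ℕ, p = MvPolynomial.monomial a 1
/-- A monomial ideal has *linear quotients* if its minimal monomial generators admit an
ordering `u 0, u 1, …` such that each colon ideal `(u_0,…,u_{i-1}) : u_i` is generated by a
subset of the variables.  (The conditions that the `u i` are monomials, pairwise
non-dividing, and generate `I` say exactly that they are the minimal monomial generators
of `I`.) -/
def HasLinearQuotients {K : Type*} [Field K] {n : ℕ}
    (I : Ideal (MvPolynomial (Fin n) K)) : Prop :=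
  ∃ (m : ℕ) (u : Fin m → MvPolynomial (Fin n) K),
    (∀ i, IsMonomialElt (u i)) ∧
    (∀ i j, i ≠ j → ¬ u i ∣ u j) ∧
    Ideal.span (Set.range u) = I ∧
    ∀ i : Fin m,
      genByVars ((Ideal.span (u '' {j | j < i})).colon (Ideal.span {u i}))
/-- The natural ordering `1, 2, …, n` of the vertices is a perfect elimination order of
`H`: for each vertex, its neighbourhood among the later vertices is a clique. -/
def natPEO {n : ℕ} (H : SimpleGraph (Fin n)) : Prop :=
  ∀ i j k : Fin n, i < j → i < k → j ≠ k → H.Adj i j → H.Adj i k → H.Adj j k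

/-- The reversed ordering `n, n-1, …, 1` of the vertices is a perfect elimination order of
`H`: for each vertex, its neighbourhood among the earlier-labelled vertices is a clique. -/
def revPEO {n : ℕ} (H : SimpleGraph (Fin n)) : Prop :=
  ∀ i j k : Fin n, j < i → k < i → j ≠ k → H.Adj i j → H.Adj i k → H.Adj j k
/-- The generating monomials of the `k`-th homological shift ideal `HS_k(I(G))`:
all monomials `x_A x_B` with `A, B` nonempty, `max A < min B`, `|A ∪ B| = k + 2` and
`{max A, b} ∈ E(G)` for all `b ∈ B`. -/
def HSgens (K : Type*) [Field K] {n : ℕ} (G : SimpleGraph (Fin n)) (k : ℕ) :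
    Set (MvPolynomial (Fin n) K) :=
  {w | ∃ A B : Finset (Fin n), A.Nonempty ∧ B.Nonempty ∧
    (∀ a ∈ A, ∀ b ∈ B, a < b) ∧ (A ∪ B).card = k + 2 ∧
    (∃ a0 ∈ A, (∀ a ∈ A, a ≤ a0) ∧ ∀ b ∈ B, G.Adj a0 b) ∧
    w = (∏ i ∈ A, MvPolynomial.X i) * ∏ i ∈ B, MvPolynomial.X i}

/-!
As `Gᶜ` is a forest with perfect elimination order `1, …, n`, every vertex has at most one later
non-neighbour in `G`. The generators of `HS_k(I(G))` are the `x_S` with `|S| = k + 2` such that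
some non-maximal `a ∈ S` is adjacent in `G` to all later elements of `S`; list them
lexicographically. If `S'` precedes `S`, let `t ∈ S'` be the least element of `S' ∆ S` and
replace in `S` the later non-neighbour of `t` (if there is none, any element above `t`) by `t`.
The result is again a generator, witnessed by `t`, unless none of its elements lies above `t`,
in which case it is `S'`. This exchange property makes every colon ideal generated by variables.
-/

open Finset

section SquarefreeMonomial

variable {σ R : Type*}

noncomputable def sqfreeExp (S : Finset σ) : σ →₀ ℕ := ∑ i ∈ S, Finsupp.single i 1

lemma sqfreeExp_apply [DecidableEq σ] (S : Finset σ) (j : σ) :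
    sqfreeExp S j = if j ∈ S then 1 else 0 := by
  simp [sqfreeExp, Finsupp.finsetSum_apply, Finsupp.single_apply]

lemma prod_X_eq_monomial_sqfreeExp [CommSemiring R] (S : Finset σ) :
    ∏ i ∈ S, (X i : MvPolynomial σ R) = monomial (sqfreeExp S) 1 := by
  rw [sqfreeExp, monomial_sum_one]
  rfl

lemma prod_X_dvd_prod_X_iff [CommSemiring R] [Nontrivial R] {S T : Finset σ} :
    (∏ i ∈ S, (X i : MvPolynomial σ R)) ∣ ∏ i ∈ T, X i ↔ S ⊆ T := by
  classical
  refine ⟨fun h s hs => ?_, fun h => prod_dvd_prod_of_subset S T _ h⟩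
  rw [prod_X_eq_monomial_sqfreeExp, prod_X_eq_monomial_sqfreeExp, monomial_dvd_monomial] at h
  have hle := (h.1.resolve_left one_ne_zero) s
  rw [sqfreeExp_apply, sqfreeExp_apply, if_pos hs] at hle
  by_contra hsT
  simp [hsT] at hle

theorem colon_span_prod_X_eq_span_X [CommSemiring R] [DecidableEq σ] (P : Set (Finset σ))
    (S : Finset σ)
    (hexch : ∀ T ∈ P, ∃ t ∈ T, t ∉ S ∧ ∃ T' ∈ P, T' ⊆ insert t S) :
    (Ideal.span ((fun T => ∏ i ∈ T, (X i : MvPolynomial σ R)) '' P)).colon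
        (Ideal.span {∏ i ∈ S, (X i : MvPolynomial σ R)}) =
      Ideal.span (X '' {t | t ∉ S ∧ ∃ T ∈ P, T ⊆ insert t S}) := by
  apply le_antisymm
  · intro f hf
    simp_rw [prod_X_eq_monomial_sqfreeExp] at hf
    rw [Ideal.mem_colon_span_singleton, ← Set.image_image (fun e => monomial e (1 : R)),
      mem_ideal_span_monomial_image] at hf
    rw [mem_ideal_span_X_image]
    intro μ hμ
    have hμS : μ + sqfreeExp S ∈ (f * monomial (sqfreeExp S) 1).support := by
      rwa [mem_support_iff, coeff_mul_monomial, mul_one, ← mem_support_iff]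
    obtain ⟨_, ⟨T, hT, rfl⟩, hle⟩ := hf _ hμS
    obtain ⟨t, htT, htS, T', hT', hsub⟩ := hexch T hT
    refine ⟨t, ⟨htS, T', hT', hsub⟩, fun hμt => ?_⟩
    have := hle t
    simp [sqfreeExp_apply, htT, htS, hμt] at this
  · rw [Ideal.span_le]
    rintro _ ⟨t, ⟨htS, T, hT, hsub⟩, rfl⟩
    rw [SetLike.mem_coe, Ideal.mem_colon_span_singleton, ← prod_insert htS,
      ← prod_sdiff hsub]
    exact Ideal.mul_mem_left _ _ (Ideal.subset_span ⟨T, hT, rfl⟩)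

end SquarefreeMonomial

theorem hasLinearQuotients_of_exchange {K β : Type*} [Field K] [LinearOrder β] {n : ℕ}
    (key : Finset (Fin n) ≃ β) (𝓕 : Finset (Finset (Fin n)))
    (hcard : ∀ S ∈ 𝓕, ∀ T ∈ 𝓕, #S = #T)
    (hexch : ∀ S ∈ 𝓕, ∀ S' ∈ 𝓕, key S' < key S →
      ∃ t ∈ S', t ∉ S ∧ ∃ S'' ∈ 𝓕, key S'' < key S ∧ S'' ⊆ insert t S) :
    HasLinearQuotients
      (Ideal.span ((fun S => ∏ i ∈ S, (X i : MvPolynomial (Fin n) K)) '' 𝓕)) := by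
  set e := (𝓕.map key.toEmbedding).orderEmbOfFin rfl
  set U : Fin _ → Finset (Fin n) := fun i => key.symm (e i)
  have hU : ∀ i, U i ∈ 𝓕 := fun i => by
    simpa [U, mem_map_equiv] using (𝓕.map key.toEmbedding).orderEmbOfFin_mem rfl i
  have hkeyU : ∀ i, key (U i) = e i := fun i => key.apply_symm_apply _
  have hU_surj : ∀ S ∈ 𝓕, ∃ i, U i = S := fun S hS => by
    have : key S ∈ Set.range e := by simpa [e, range_orderEmbOfFin] using hS
    obtain ⟨i, hi⟩ := this
    exact ⟨i, key.symm_apply_eq.mpr hi⟩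
  refine ⟨_, fun i => ∏ x ∈ U i, X x, fun i => ⟨_, prod_X_eq_monomial_sqfreeExp _⟩,
    fun i j hij hdvd => ?_, ?_, fun i => ?_⟩
  · rw [prod_X_dvd_prod_X_iff] at hdvd
    have := eq_of_subset_of_card_le hdvd (hcard _ (hU j) _ (hU i)).le
    exact hij (e.injective (by rw [← hkeyU, ← hkeyU, this]))
  · congr 1
    ext p
    constructor
    · rintro ⟨i, rfl⟩
      exact ⟨U i, hU i, rfl⟩
    · rintro ⟨S, hS, rfl⟩
      obtain ⟨i, rfl⟩ := hU_surj S hS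
      exact ⟨i, rfl⟩
  · rw [← Set.image_image (fun S => ∏ x ∈ S, (X x : MvPolynomial (Fin n) K)) U]
    refine ⟨_, colon_span_prod_X_eq_span_X _ _ ?_⟩
    rintro _ ⟨j, hj, rfl⟩
    obtain ⟨t, ht, htS, S'', hS'', hlt, hsub⟩ :=
      hexch _ (hU i) _ (hU j) (by rw [hkeyU, hkeyU]; exact e.strictMono hj)
    obtain ⟨l, rfl⟩ := hU_surj S'' hS''
    rw [hkeyU, hkeyU, e.lt_iff_lt] at hlt
    exact ⟨t, ht, htS, U l, ⟨l, hlt, rfl⟩, hsub⟩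

section HomologicalShift

variable {α : Type*} [LinearOrder α]

/-- Lexicographic order on finsets (colex for the reversed order on `α`, reversed): `s < t` iff
the least element of `s ∆ t` lies in `s`. -/
def toLexFinset : Finset α ≃ (Colex (Finset αᵒᵈ))ᵒᵈ := toColex.trans OrderDual.toDual

lemma toLexFinset_lt_toLexFinset {s t : Finset α} :
    toLexFinset s < toLexFinset t ↔ ∃ a ∈ s, a ∉ t ∧ ∀ b ∈ t, b ∉ s → a < b :=
  (OrderDual.toDual_lt_toDual (α := Colex (Finset αᵒᵈ))).trans
    Colex.toColex_lt_toColex_iff_exists_forall_lt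

def IsHSSupport (G : SimpleGraph α) (k : ℕ) (S : Finset α) : Prop :=
  #S = k + 2 ∧ ∃ a ∈ S, (∃ b ∈ S, a < b) ∧ ∀ b ∈ S, a < b → G.Adj a b

variable {G : SimpleGraph α} {k : ℕ}

lemma exists_gt_forall_not_adj_eq
    (hG : ∀ a b c, a < b → a < c → ¬G.Adj a b → ¬G.Adj a c → b = c)
    {S : Finset α} {t : α} (h : ∃ s ∈ S, t < s) :
    ∃ s ∈ S, t < s ∧ ∀ b ∈ S, t < b → ¬G.Adj t b → b = s := by
  by_cases hn : ∃ b ∈ S, t < b ∧ ¬G.Adj t b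
  · obtain ⟨s, hsS, hts, hns⟩ := hn
    exact ⟨s, hsS, hts, fun b _ htb hnb => hG t b s htb hts hnb hns⟩
  · obtain ⟨s, hsS, hts⟩ := h
    push Not at hn
    exact ⟨s, hsS, hts, fun b hb htb hnb => absurd (hn b hb htb) hnb⟩

theorem IsHSSupport.exists_exchange
    (hG : ∀ a b c, a < b → a < c → ¬G.Adj a b → ¬G.Adj a c → b = c)
    {S S' : Finset α} (hS : IsHSSupport G k S) (hS' : IsHSSupport G k S')
    (hlt : toLexFinset S' < toLexFinset S) :
    ∃ t ∈ S', t ∉ S ∧ ∃ S'', IsHSSupport G k S'' ∧ toLexFinset S'' < toLexFinset S ∧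
      S'' ⊆ insert t S := by
  obtain ⟨t, htS', htS, hmin⟩ := toLexFinset_lt_toLexFinset.mp hlt
  have hbelow : ∀ x ∈ S, x < t → x ∈ S' := fun x hx hxt => by
    by_contra hxS'
    exact (hmin x hx hxS').asymm hxt
  have habove : ∃ s ∈ S, t < s := by
    by_contra! hle
    have hSS' : S ⊆ S' := fun x hx =>
      hbelow x hx ((hle x hx).lt_of_ne (ne_of_mem_of_not_mem hx htS))
    have := eq_of_subset_of_card_le hSS' (by rw [hS.1, hS'.1])
    exact htS (this ▸ htS')
  obtain ⟨s, hsS, hts, hs⟩ := exists_gt_forall_not_adj_eq hG habove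
  have htSs : t ∉ S.erase s := fun h => htS (mem_of_mem_erase h)
  have hcard : #(insert t (S.erase s)) = k + 2 := by
    rw [card_insert_of_notMem htSs, card_erase_of_mem hsS, hS.1]
    omega
  have hS'' : IsHSSupport G k (insert t (S.erase s)) := by
    by_cases hlater : ∃ b ∈ insert t (S.erase s), t < b
    · refine ⟨hcard, t, mem_insert_self _ _, hlater, fun b hb htb => ?_⟩
      by_contra hnb
      obtain ⟨hbs, hbS⟩ := mem_erase.mp ((mem_insert.mp hb).resolve_left htb.ne')
      exact hbs (hs b hbS htb hnb)
    · -- otherwise the exchanged set lies below `t`, where `S` and `S'` agree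
      push Not at hlater
      have hsub : insert t (S.erase s) ⊆ S' := insert_subset htS' fun x hx =>
        hbelow x (mem_of_mem_erase hx) ((hlater x (mem_insert_of_mem hx)).lt_of_ne
          (ne_of_mem_of_not_mem hx htSs))
      rwa [eq_of_subset_of_card_le hsub (by rw [hS'.1, hcard])]
  refine ⟨t, htS', htS, _, hS'', toLexFinset_lt_toLexFinset.mpr ⟨t, mem_insert_self _ _, htS,
    fun b hbS hb => ?_⟩, insert_subset_insert _ (erase_subset _ _)⟩
  obtain rfl : b = s := by_contra fun hbs => hb (mem_insert_of_mem (mem_erase.mpr ⟨hbs, hbS⟩))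
  exact hts

end HomologicalShift

theorem HSgens_eq_image_isHSSupport (K : Type*) [Field K] {n : ℕ} (G : SimpleGraph (Fin n))
    (k : ℕ) :
    HSgens K G k =
      (fun S => ∏ i ∈ S, (X i : MvPolynomial (Fin n) K)) '' {S | IsHSSupport G k S} := by
  ext w
  constructor
  · rintro ⟨A, B, -, ⟨b, hb⟩, hAB, hcard, ⟨a, ha, hmax, hadj⟩, rfl⟩
    have hdisj : Disjoint A B :=
      disjoint_left.mpr fun x hxA hxB => (hAB x hxA x hxB).false
    refine ⟨A ∪ B, ⟨hcard, a, mem_union_left _ ha,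
      ⟨b, mem_union_right _ hb, hAB a ha b hb⟩, fun c hc hac => ?_⟩, prod_union hdisj⟩
    rcases mem_union.mp hc with hcA | hcB
    · exact absurd (hmax c hcA) hac.not_ge
    · exact hadj c hcB
  · rintro ⟨S, ⟨hcard, a, haS, ⟨b, hbS, hab⟩, hadj⟩, rfl⟩
    refine ⟨S.filter (· ≤ a), S.filter (¬ · ≤ a), ⟨a, by simp [haS]⟩,
      ⟨b, by simp [hbS, hab]⟩, fun x hx y hy => ?_, by rwa [filter_union_filter_not_eq],
      ⟨a, by simp [haS], fun x hx => (mem_filter.mp hx).2, fun c hc => ?_⟩,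
      (prod_filter_mul_prod_filter_not S _ _).symm⟩
    · exact (mem_filter.mp hx).2.trans_lt (not_le.mp (mem_filter.mp hy).2)
    · exact hadj c (mem_filter.mp hc).1 (not_le.mp (mem_filter.mp hc).2)

theorem natPEO.eq_of_lt_of_adj {n : ℕ} {H : SimpleGraph (Fin n)} (hPEO : natPEO H)
    (hH : H.IsAcyclic) {a b c : Fin n} (hab : a < b) (hac : a < c) (hb : H.Adj a b)
    (hc : H.Adj a c) : b = c := by
  by_contra hbc
  exact hH.cliqueFree le_rfl _
    (SimpleGraph.is3Clique_triple_iff.mpr ⟨hb, hc, hPEO a b c hab hac hbc hb hc⟩)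

/-- **Corollary 3.3 (Ficarra–Herzog).**  Let `G` be a graph on `Fin n` such that `Gᶜ` is a
tree and the natural order is a perfect elimination order of `Gᶜ`.  Then every
homological shift ideal `HS_k(I(G))` has linear quotients. -/
theorem HS_k_linearQuotients_of_tree_complement
    {K : Type*} [Field K] {n : ℕ} (G : SimpleGraph (Fin n))
    (htree : Gᶜ.IsTree)
    (hPEO : natPEO Gᶜ) :
    ∀ k : ℕ, HasLinearQuotients (Ideal.span (HSgens K G k)) := by
  intro k
  classical
  have hG : ∀ a b c, a < b → a < c → ¬G.Adj a b → ¬G.Adj a c → b = c :=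
    fun a b c hab hac hb hc => hPEO.eq_of_lt_of_adj htree.isAcyclic hab hac
      ((G.compl_adj a b).mpr ⟨hab.ne, hb⟩) ((G.compl_adj a c).mpr ⟨hac.ne, hc⟩)
  have h := hasLinearQuotients_of_exchange (K := K) toLexFinset
    (univ.filter (IsHSSupport G k)) (fun S hS T hT => by
      rw [(mem_filter.mp hS).2.1, (mem_filter.mp hT).2.1])
    (fun S hS S' hS' hlt => by
      simpa using (mem_filter.mp hS).2.exists_exchange hG (mem_filter.mp hS').2 hlt)
  rw [HSgens_eq_image_isHSSupport]
  simpa using h
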